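/- For nonnegative integers n, r, x: ∑_{k=0}^{min(n,r)} q^{(k-n)(k-r)} · C_q(n, k) · C_q(r, k) · C_q(x+n+r+k, n+r) = C_q(x+n+r, n) · C_q(x+n+r, r). -/

import Mathlib

open Finset

/-- The q-Pochhammer symbol `(a;q)_n = ∏_{j=0}^{n-1} (1 - a q^j)`. -/
noncomputable def qPoch (q a : RatFunc ℚ) (n : ℕ) : RatFunc ℚ :=
  ∏ j ∈ Finset.range n, (1 - a * q ^ j)

/-- The Gaussian (q-binomial) coefficient `C_q(m, k)`, defined as
`(q;q)_m / ((q;q)_k (q;q)_{m-k})` for `0 ≤ k ≤ m`, and `0` otherwise. -/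
noncomputable def qBinom (q : RatFunc ℚ) (m k : ℤ) : RatFunc ℚ :=
  if 0 ≤ k ∧ k ≤ m then
    qPoch q q m.toNat / (qPoch q q k.toNat * qPoch q q (m - k).toNat)
  else 0

/-!
Expand `C_q(x+n+r+k, n+r)` by the q-Vandermonde identity as a sum over `j` of
`q^{(x+j)j} C_q(x+n+r, n+r-j) C_q(k, j)` and exchange the sums. The inner sum over `k`
collapses, by trinomial revision `C_q(n,k) C_q(k,j) = C_q(n,j) C_q(n-j,k-j)` and a second
Vandermonde, to `C_q(n,j) C_q(n+r-j, n)`. Trinomial revision turns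
`C_q(x+n+r, n+r-j) C_q(n+r-j, n)` into `C_q(x+n+r, n) C_q(x+r, r-j)`, and a third
Vandermonde sums over `j` to `C_q(x+n+r, r)`.
-/

lemma qPoch_zero (q a : RatFunc ℚ) : qPoch q a 0 = 1 := prod_range_zero _

lemma qPoch_succ (q a : RatFunc ℚ) (n : ℕ) :
    qPoch q a (n + 1) = qPoch q a n * (1 - a * q ^ n) :=
  prod_range_succ _ _

lemma qPoch_X_X_ne_zero (n : ℕ) : qPoch RatFunc.X RatFunc.X n ≠ 0 := by
  refine prod_ne_zero_iff.2 fun j _ => ?_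
  rw [← pow_succ', sub_ne_zero, ← RatFunc.algebraMap_X, ← map_pow,
    ← map_one (algebraMap (Polynomial ℚ) (RatFunc ℚ)),
    (RatFunc.algebraMap_injective ℚ).ne_iff]
  intro h
  simpa using congrArg Polynomial.natDegree h

noncomputable def gaussBinom (q : RatFunc ℚ) (a b : ℕ) : RatFunc ℚ :=
  if b ≤ a then qPoch q q a / (qPoch q q b * qPoch q q (a - b)) else 0

lemma qBinom_natCast (q : RatFunc ℚ) (a b : ℕ) : qBinom q a b = gaussBinom q a b := by
  simp only [qBinom, gaussBinom, Nat.cast_nonneg, Nat.cast_le, true_and, Int.toNat_natCast]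
  split_ifs with h
  · rw [← Nat.cast_sub h, Int.toNat_natCast]
  · rfl

section
variable {q : RatFunc ℚ}

lemma gaussBinom_of_le {a b : ℕ} (h : b ≤ a) :
    gaussBinom q a b = qPoch q q a / (qPoch q q b * qPoch q q (a - b)) :=
  if_pos h

lemma gaussBinom_of_lt {a b : ℕ} (h : a < b) : gaussBinom q a b = 0 :=
  if_neg h.not_ge

lemma gaussBinom_zero_right (hq : ∀ n, qPoch q q n ≠ 0) (a : ℕ) : gaussBinom q a 0 = 1 := by
  rw [gaussBinom_of_le a.zero_le, qPoch_zero, one_mul, Nat.sub_zero, div_self (hq a)]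

lemma gaussBinom_self (hq : ∀ n, qPoch q q n ≠ 0) (a : ℕ) : gaussBinom q a a = 1 := by
  rw [gaussBinom_of_le le_rfl, Nat.sub_self, qPoch_zero, mul_one, div_self (hq a)]

lemma gaussBinom_symm {a b : ℕ} (h : b ≤ a) : gaussBinom q a (a - b) = gaussBinom q a b := by
  rw [gaussBinom_of_le h, gaussBinom_of_le (Nat.sub_le a b), Nat.sub_sub_self h, mul_comm]

lemma gaussBinom_succ_succ (hq : ∀ n, qPoch q q n ≠ 0) (m k : ℕ) :
    gaussBinom q (m + 1) (k + 1) = gaussBinom q m k + q ^ (k + 1) * gaussBinom q m (k + 1) := by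
  rcases lt_trichotomy m k with h | rfl | h
  · simp only [gaussBinom_of_lt (by omega : m + 1 < k + 1), gaussBinom_of_lt h,
      gaussBinom_of_lt (by omega : m < k + 1), mul_zero, add_zero]
  · rw [gaussBinom_self hq, gaussBinom_self hq, gaussBinom_of_lt (Nat.lt_succ_self m), mul_zero,
      add_zero]
  · obtain ⟨d, rfl⟩ := Nat.exists_eq_add_of_lt h
    have hk : 1 - q * q ^ k ≠ 0 := right_ne_zero_of_mul (qPoch_succ q q k ▸ hq (k + 1))
    have hd : 1 - q * q ^ d ≠ 0 := right_ne_zero_of_mul (qPoch_succ q q d ▸ hq (d + 1))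
    rw [gaussBinom_of_le (by omega), gaussBinom_of_le (by omega), gaussBinom_of_le (by omega),
      show k + d + 1 + 1 - (k + 1) = d + 1 by omega, show k + d + 1 - k = d + 1 by omega,
      show k + d + 1 - (k + 1) = d by omega, qPoch_succ q q (k + d + 1), qPoch_succ q q k,
      qPoch_succ q q d]
    field_simp [hq]
    ring

lemma gaussBinom_mul {a k j : ℕ} (hq : ∀ n, qPoch q q n ≠ 0) (hjk : j ≤ k) :
    gaussBinom q a k * gaussBinom q k j = gaussBinom q a j * gaussBinom q (a - j) (k - j) := by
  by_cases hka : k ≤ a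
  · rw [gaussBinom_of_le hka, gaussBinom_of_le hjk, gaussBinom_of_le (hjk.trans hka),
      gaussBinom_of_le (by omega), show a - j - (k - j) = a - k by omega]
    field_simp [hq]
  · rw [gaussBinom_of_lt (by omega : a < k), zero_mul]
    rcases le_or_gt j a with hja | hja
    · rw [gaussBinom_of_lt (by omega : a - j < k - j), mul_zero]
    · rw [gaussBinom_of_lt hja, zero_mul]

lemma pow_mul_gaussBinom_congr {a i e e' : ℕ} (h : i ≤ a → e = e') :
    q ^ e * gaussBinom q a i = q ^ e' * gaussBinom q a i := by
  rcases le_or_gt i a with hi | hi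
  · rw [h hi]
  · simp only [gaussBinom_of_lt hi, mul_zero]

theorem gaussBinom_add_eq_sum_antidiagonal (hq : ∀ n, qPoch q q n ≠ 0) (a b c : ℕ) :
    gaussBinom q (a + b) c = ∑ p ∈ antidiagonal c,
      q ^ ((a - p.1) * p.2) * gaussBinom q a p.1 * gaussBinom q b p.2 := by
  induction a generalizing c with
  | zero =>
    cases c with
    | zero => simp [gaussBinom_zero_right hq]
    | succ c => simp [Nat.sum_antidiagonal_succ, gaussBinom_zero_right hq, gaussBinom_of_lt]
  | succ a ih =>
    cases c with
    | zero => simp [gaussBinom_zero_right hq]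
    | succ c =>
      rw [Nat.add_right_comm, gaussBinom_succ_succ hq, ih, ih, Nat.sum_antidiagonal_succ,
        Nat.sum_antidiagonal_succ, mul_add, mul_sum]
      simp only [gaussBinom_succ_succ hq, gaussBinom_zero_right hq, Nat.sub_zero,
        Nat.add_sub_add_right, mul_add, add_mul, sum_add_distrib]
      have shift : ∀ p ∈ antidiagonal c,
          q ^ (c + 1) *
              (q ^ ((a - (p.1 + 1)) * p.2) * gaussBinom q a (p.1 + 1) * gaussBinom q b p.2)
            = q ^ ((a - p.1) * p.2) * (q ^ (p.1 + 1) * gaussBinom q a (p.1 + 1)) *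
              gaussBinom q b p.2 := by
        rintro ⟨i, j⟩ hij
        rw [HasAntidiagonal.mem_antidiagonal] at hij
        subst hij
        have key := pow_mul_gaussBinom_congr (q := q) (a := a) (i := i + 1)
          (e := i + j + 1 + (a - (i + 1)) * j) (e' := (a - i) * j + (i + 1)) fun h => by
            obtain ⟨d, rfl⟩ := Nat.exists_eq_add_of_le h
            rw [Nat.add_sub_cancel_left, show i + 1 + d - i = d + 1 by omega]
            ring
        simp only [pow_add] at key
        linear_combination gaussBinom q b j * key
      rw [sum_congr rfl shift]
      ring

theorem gaussBinom_add_eq_sum_range (hq : ∀ n, qPoch q q n ≠ 0) (a b c : ℕ) :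
    gaussBinom q (a + b) c = ∑ j ∈ range (c + 1),
      q ^ ((a - (c - j)) * j) * gaussBinom q a (c - j) * gaussBinom q b j := by
  rw [gaussBinom_add_eq_sum_antidiagonal hq, ← Nat.sum_antidiagonal_swap,
    Nat.sum_antidiagonal_eq_sum_range_succ_mk]
  rfl

lemma sum_gaussBinom_mul_gaussBinom_mul_gaussBinom (hq : ∀ n, qPoch q q n ≠ 0) (a b j : ℕ) :
    ∑ k ∈ range (b + 1), q ^ ((a - k) * (b - k)) * gaussBinom q a k * gaussBinom q b k *
      gaussBinom q k j = gaussBinom q a j * gaussBinom q (a + b - j) a := by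
  by_cases hj : j ≤ a ∧ j ≤ b
  swap
  · have hrhs : gaussBinom q a j * gaussBinom q (a + b - j) a = 0 := by
      rcases lt_or_ge a j with h | h
      · rw [gaussBinom_of_lt h, zero_mul]
      · rw [gaussBinom_of_lt (by omega : a + b - j < a), mul_zero]
    rw [hrhs]
    refine sum_eq_zero fun k hk => ?_
    rw [mem_range] at hk
    rcases lt_or_ge k j with hkj | hkj
    · rw [gaussBinom_of_lt hkj, mul_zero]
    · rw [gaussBinom_of_lt (by omega : a < k), mul_zero, zero_mul, zero_mul]
  obtain ⟨hja, hjb⟩ := hj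
  set f : ℕ → RatFunc ℚ := fun k ↦
    q ^ ((a - k) * (b - k)) * gaussBinom q a k * gaussBinom q b k * gaussBinom q k j
  calc ∑ k ∈ range (b + 1), f k
      = ∑ s ∈ range (b + 1), f (b - s) := by
        rw [← sum_range_reflect f (b + 1), Nat.add_sub_cancel]
    _ = ∑ s ∈ range (b - j + 1), f (b - s) := by
        refine (sum_subset (range_subset_range.2 (by omega)) fun s hs hs' => ?_).symm
        simp only [mem_range] at hs hs'
        simp only [f, gaussBinom_of_lt (by omega : b - s < j), mul_zero]
    _ = ∑ s ∈ range (b - j + 1), gaussBinom q a j * (q ^ ((a - j - (b - j - s)) * s) *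
          gaussBinom q (a - j) (b - j - s) * gaussBinom q b s) := by
        refine sum_congr rfl fun s hs => ?_
        rw [mem_range] at hs
        have hsb : s ≤ b := by omega
        calc f (b - s)
            = q ^ ((a - (b - s)) * s) * gaussBinom q b s *
                (gaussBinom q a (b - s) * gaussBinom q (b - s) j) := by
              simp only [f, Nat.sub_sub_self hsb, gaussBinom_symm hsb]
              ring
          _ = _ := by
              rw [gaussBinom_mul hq (by omega), show a - (b - s) = a - j - (b - j - s) by omega,
                show b - s - j = b - j - s by omega]
              ring
    _ = gaussBinom q a j * gaussBinom q (a + b - j) a := by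
        rw [← mul_sum, ← gaussBinom_add_eq_sum_range hq, show a - j + b = a + b - j by omega,
          ← gaussBinom_symm (by omega : b - j ≤ a + b - j),
          show a + b - j - (b - j) = a by omega]

theorem q_gould_sum_gaussBinom (hq : ∀ n, qPoch q q n ≠ 0) (n r x : ℕ) :
    ∑ k ∈ range (r + 1), q ^ ((n - k) * (r - k)) * gaussBinom q n k * gaussBinom q r k *
      gaussBinom q (x + n + r + k) (n + r) =
      gaussBinom q (x + n + r) n * gaussBinom q (x + n + r) r := by
  set c : ℕ → RatFunc ℚ := fun j ↦ q ^ ((x + j) * j) * gaussBinom q (x + n + r) (n + r - j)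
  calc _ = ∑ k ∈ range (r + 1), ∑ j ∈ range (n + r + 1), c j *
          (q ^ ((n - k) * (r - k)) * gaussBinom q n k * gaussBinom q r k * gaussBinom q k j) := by
        refine sum_congr rfl fun k _ => ?_
        rw [gaussBinom_add_eq_sum_range hq, mul_sum]
        refine sum_congr rfl fun j hj => ?_
        rw [mem_range] at hj
        rw [show x + n + r - (n + r - j) = x + j by omega]
        ring
    _ = ∑ j ∈ range (n + r + 1), c j * (gaussBinom q n j * gaussBinom q (n + r - j) n) := by
        rw [sum_comm]
        simp only [← mul_sum, sum_gaussBinom_mul_gaussBinom_mul_gaussBinom hq]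
    _ = ∑ j ∈ range (r + 1), c j * (gaussBinom q n j * gaussBinom q (n + r - j) n) := by
        refine (sum_subset (range_subset_range.2 (by omega)) fun j hj hj' => ?_).symm
        simp only [mem_range] at hj hj'
        rw [gaussBinom_of_lt (by omega : n + r - j < n), mul_zero, mul_zero]
    _ = ∑ j ∈ range (r + 1), gaussBinom q (x + n + r) n *
          (q ^ ((x + r - (r - j)) * j) * gaussBinom q (x + r) (r - j) * gaussBinom q n j) := by
        refine sum_congr rfl fun j hj => ?_
        rw [mem_range] at hj
        have trinomial := gaussBinom_mul (a := x + n + r) hq (by omega : n ≤ n + r - j)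
        rw [show x + n + r - n = x + r by omega, show n + r - j - n = r - j by omega] at trinomial
        rw [show x + r - (r - j) = x + j by omega]
        linear_combination q ^ ((x + j) * j) * gaussBinom q n j * trinomial
    _ = _ := by
        rw [← mul_sum, ← gaussBinom_add_eq_sum_range hq, show x + r + n = x + n + r by omega]

end

theorem q_gould_symmetric (n r x : ℕ) :
    ∑ k ∈ Finset.range (min n r + 1),
      (RatFunc.X : RatFunc ℚ) ^ (((k : ℤ) - n) * ((k : ℤ) - r)) *
        qBinom RatFunc.X (n : ℤ) (k : ℤ) *
        qBinom RatFunc.X (r : ℤ) (k : ℤ) *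
        qBinom RatFunc.X ((x : ℤ) + n + r + k) ((n : ℤ) + r)
    = qBinom RatFunc.X ((x : ℤ) + n + r) (n : ℤ) *
        qBinom RatFunc.X ((x : ℤ) + n + r) (r : ℤ) := by
  simp only [← Nat.cast_add, qBinom_natCast]
  rw [← q_gould_sum_gaussBinom qPoch_X_X_ne_zero]
  refine sum_subset_zero_on_sdiff (range_subset_range.2 (by omega)) (fun k hk => ?_)
    fun k hk => ?_
  · rw [mem_sdiff, mem_range, mem_range] at hk
    rw [gaussBinom_of_lt (by omega : n < k), mul_zero, zero_mul, zero_mul]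
  · rw [mem_range] at hk
    have hexp : ((k : ℤ) - n) * ((k : ℤ) - r) = ((n - k) * (r - k) : ℕ) := by
      push_cast [Nat.cast_sub (by omega : k ≤ n), Nat.cast_sub (by omega : k ≤ r)]
      ring
    rw [hexp, zpow_natCast]
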